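/- arXiv:1704.00680 — 5 statements merged into one kernel-verified Lean document; each statement's English description precedes it below -/
import Mathlib

section
/- Let $(\Lambda, \mathcal{B}_\Lambda, \mu_\Lambda)$ and $(\mathcal{D}, \mathcal{B}_\mathcal{D}, \mu_\mathcal{D})$ be measure spaces, $Q : \Lambda \to \mathcal{D}$ a measurable map, $P^{prior}$ a probability measure on $\Lambda$ with density $\pi^{prior}$ w.r.t. $\mu_\Lambda$, and suppose the push-forward measure $Q_* P^{prior}$ has density $\pi^{Q(prior)}$ w.r.t. $\mu_\mathcal{D}$. If $\pi^{obs}$ is a probability density on $\mathcal{D}$ that is absolutely continuous with respect to $\pi^{Q(prior)}$ (i.e., $\pi^{obs}(q) = 0$ whenever $\pi^{Q(prior)}(q) = 0$), then the function $\pi^{post}(\lambda) = \pi^{prior}(\lambda) \cdot \pi^{obs}(Q(\lambda)) / \pi^{Q(prior)}(Q(\lambda))$ integrates to $1$ over $\Lambda$ with respect to $\mu_\Lambda$, hence defines a probability density. -/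
open MeasureTheory ENNReal

/-! Pushing forward along `Q` turns the integral into `∫ πobs / πQ d(Q_* P^prior)`, i.e.
`∫ πQ * (πobs / πQ) dμD`. The integrand equals `πobs` wherever `πQ` is finite (a.e., since
`πQ` has total mass `1`): where `πQ ≠ 0` the quotient cancels, and where `πQ = 0` both
sides vanish by absolute continuity. -/

section

variable {α β : Type*} [MeasurableSpace α] [MeasurableSpace β]

theorem lintegral_mul_comp_eq_lintegral_map_withDensity {μ : Measure α} {f : α → ℝ≥0∞}
    (hf : Measurable f) {Q : α → β} (hQ : Measurable Q) {g : β → ℝ≥0∞} (hg : Measurable g) :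
    ∫⁻ a, f a * g (Q a) ∂μ = ∫⁻ b, g b ∂(μ.withDensity f).map Q := by
  rw [lintegral_map hg hQ]
  exact (lintegral_withDensity_eq_lintegral_mul μ hf (hg.comp hQ)).symm

theorem lintegral_eq_of_map_withDensity_eq {μ : Measure α} {ν : Measure β} {f : α → ℝ≥0∞}
    {g : β → ℝ≥0∞} {Q : α → β} (hQ : Measurable Q)
    (h : (μ.withDensity f).map Q = ν.withDensity g) :
    ∫⁻ b, g b ∂ν = ∫⁻ a, f a ∂μ := by
  have := congrArg (fun m : Measure β => m Set.univ) h
  simpa [Measure.map_apply hQ MeasurableSet.univ] using this.symm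

theorem lintegral_mul_div_eq_of_imp {ν : Measure β} {g h : β → ℝ≥0∞} (hg : Measurable g)
    (hg_fin : ∫⁻ b, g b ∂ν ≠ ∞) (habs : ∀ b, g b = 0 → h b = 0) :
    ∫⁻ b, g b * (h b / g b) ∂ν = ∫⁻ b, h b ∂ν := by
  refine lintegral_congr_ae ?_
  filter_upwards [ae_lt_top hg hg_fin] with b hb
  exact ENNReal.mul_div_cancel' (habs b) fun h_top => absurd h_top hb.ne

end

/-- Normalization of the consistent Bayesian posterior density: if the observed density
is absolutely continuous w.r.t. the push-forward density of the prior, then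
`πprior * (πobs ∘ Q) / (πQ ∘ Q)` integrates to one. -/
theorem consistent_posterior_is_density
    {Λ D : Type*} [MeasurableSpace Λ] [MeasurableSpace D]
    (μΛ : Measure Λ) (μD : Measure D)
    (Q : Λ → D) (hQ : Measurable Q)
    (πprior : Λ → ℝ≥0∞) (hπprior : Measurable πprior)
    (hprior1 : ∫⁻ l, πprior l ∂μΛ = 1)
    (πQ : D → ℝ≥0∞) (hπQ : Measurable πQ)
    (hpush : Measure.map Q (μΛ.withDensity πprior) = μD.withDensity πQ)
    (πobs : D → ℝ≥0∞) (hπobs : Measurable πobs)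
    (hobs1 : ∫⁻ q, πobs q ∂μD = 1)
    (habs : ∀ q, πQ q = 0 → πobs q = 0) :
    ∫⁻ l, πprior l * (πobs (Q l) / πQ (Q l)) ∂μΛ = 1 := by
  have hπQ_fin : ∫⁻ q, πQ q ∂μD ≠ ∞ := by
    rw [lintegral_eq_of_map_withDensity_eq hQ hpush, hprior1]
    exact one_ne_top
  calc ∫⁻ l, πprior l * (πobs (Q l) / πQ (Q l)) ∂μΛ
      = ∫⁻ q, πobs q / πQ q ∂μD.withDensity πQ :=
        hpush ▸ lintegral_mul_comp_eq_lintegral_map_withDensity hπprior hQ (hπobs.div hπQ)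
    _ = ∫⁻ q, πQ q * (πobs q / πQ q) ∂μD :=
        lintegral_withDensity_eq_lintegral_mul μD hπQ (hπobs.div hπQ)
    _ = 1 := by rw [lintegral_mul_div_eq_of_imp hπQ hπQ_fin habs, hobs1]
end

section
/- Let $\pi^{prior}$ be a probability density on $\Lambda$ with respect to $\mu_\Lambda$, let $Q : \Lambda \to \mathcal{D}$ be measurable with push-forward density $\pi^{Q(prior)}$, and let $\pi^{obs}_1, \pi^{obs}_2$ be two observed probability densities on $\mathcal{D}$, each absolutely continuous with respect to $\pi^{Q(prior)}$. Then the corresponding consistent Bayesian posterior densities $\pi^{post}_i(\lambda) = \pi^{prior}(\lambda)\,\pi^{obs}_i(Q(\lambda))/\pi^{Q(prior)}(Q(\lambda))$ satisfy $\int_\Lambda |\pi^{post}_1 - \pi^{post}_2| \, d\mu_\Lambda = \int_\mathcal{D} |\pi^{obs}_1 - \pi^{obs}_2| \, d\mu_\mathcal{D}$; i.e., the map from observed density to posterior is an isometry in the $L^1$ (total variation) distance. -/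
open MeasureTheory ENNReal

/-- L¹-stability of the consistent Bayesian posterior with respect to the observed density:
the map from observed density to posterior density is an isometry in total variation. -/
theorem consistent_posterior_L1_stability
    {Λ D : Type*} [MeasurableSpace Λ] [MeasurableSpace D]
    (μΛ : Measure Λ) (μD : Measure D)
    (Q : Λ → D) (hQ : Measurable Q)
    (πprior : Λ → ℝ) (hπprior : Measurable πprior) (hprior0 : ∀ l, 0 ≤ πprior l)
    (hprior1 : ∫⁻ l, ENNReal.ofReal (πprior l) ∂μΛ = 1)
    (πQ : D → ℝ) (hπQ : Measurable πQ) (hπQ0 : ∀ q, 0 ≤ πQ q)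
    (hpush : Measure.map Q (μΛ.withDensity (fun l => ENNReal.ofReal (πprior l)))
      = μD.withDensity (fun q => ENNReal.ofReal (πQ q)))
    (πobs₁ πobs₂ : D → ℝ) (hπobs₁ : Measurable πobs₁) (hπobs₂ : Measurable πobs₂)
    (hobs₁0 : ∀ q, 0 ≤ πobs₁ q) (hobs₂0 : ∀ q, 0 ≤ πobs₂ q)
    (hobs₁1 : ∫⁻ q, ENNReal.ofReal (πobs₁ q) ∂μD = 1)
    (hobs₂1 : ∫⁻ q, ENNReal.ofReal (πobs₂ q) ∂μD = 1)
    (habs₁ : ∀ q, πQ q = 0 → πobs₁ q = 0) (habs₂ : ∀ q, πQ q = 0 → πobs₂ q = 0) :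
    ∫⁻ l, ENNReal.ofReal
        |πprior l * (πobs₁ (Q l) / πQ (Q l)) - πprior l * (πobs₂ (Q l) / πQ (Q l))| ∂μΛ
      = ∫⁻ q, ENNReal.ofReal |πobs₁ q - πobs₂ q| ∂μD := by
  set g : D → ℝ≥0∞ := fun q => ENNReal.ofReal (|πobs₁ q - πobs₂ q| / πQ q) with hg
  have hgm : Measurable g :=
    ENNReal.measurable_ofReal.comp ((hπobs₁.sub hπobs₂).abs.div hπQ)
  have h1 : ∫⁻ l, ENNReal.ofReal
        |πprior l * (πobs₁ (Q l) / πQ (Q l)) - πprior l * (πobs₂ (Q l) / πQ (Q l))| ∂μΛ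
      = ∫⁻ l, ENNReal.ofReal (πprior l) * g (Q l) ∂μΛ := by
    refine lintegral_congr fun l => ?_
    rw [hg]
    simp only
    rw [← ENNReal.ofReal_mul (hprior0 l)]
    congr 1
    rw [← mul_sub, abs_mul, abs_of_nonneg (hprior0 l), div_sub_div_same, abs_div,
      abs_of_nonneg (hπQ0 _)]
  rw [h1]
  calc ∫⁻ l, ENNReal.ofReal (πprior l) * g (Q l) ∂μΛ
      = ∫⁻ l, g (Q l) ∂(μΛ.withDensity fun l => ENNReal.ofReal (πprior l)) :=
        (lintegral_withDensity_eq_lintegral_mul μΛ hπprior.ennreal_ofReal (hgm.comp hQ)).symm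
    _ = ∫⁻ q, g q ∂(Measure.map Q (μΛ.withDensity fun l => ENNReal.ofReal (πprior l))) :=
        (lintegral_map hgm hQ).symm
    _ = ∫⁻ q, g q ∂(μD.withDensity fun q => ENNReal.ofReal (πQ q)) := by rw [hpush]
    _ = ∫⁻ q, ENNReal.ofReal (πQ q) * g q ∂μD :=
        lintegral_withDensity_eq_lintegral_mul μD hπQ.ennreal_ofReal hgm
    _ = ∫⁻ q, ENNReal.ofReal |πobs₁ q - πobs₂ q| ∂μD := by
        refine lintegral_congr fun q => ?_
        simp only [hg]
        by_cases h : πQ q = 0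
        · simp [h, habs₁ q h, habs₂ q h]
        · rw [← ENNReal.ofReal_mul (hπQ0 q), mul_comm (πQ q), div_mul_cancel₀ _ h]
end

section
/- The Kullback–Leibler divergence from the consistent Bayesian prior to the posterior equals the KL divergence from the push-forward of the prior to the observed density: with $\pi^{post}(\lambda) = \pi^{prior}(\lambda)\,\pi^{obs}(Q(\lambda))/\pi^{Q(prior)}(Q(\lambda))$, one has $\int_\Lambda \pi^{post}(\lambda) \log\frac{\pi^{post}(\lambda)}{\pi^{prior}(\lambda)}\, d\mu_\Lambda(\lambda) = \int_\mathcal{D} \pi^{obs}(q) \log\frac{\pi^{obs}(q)}{\pi^{Q(prior)}(q)}\, d\mu_\mathcal{D}(q)$, whenever both integrals are defined. -/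
open MeasureTheory ENNReal

/-- The KL divergence from the prior to the consistent Bayesian posterior equals the KL
divergence from the push-forward of the prior to the observed density. -/
theorem KL_posterior_prior_eq_KL_obs_pushforward
    {Λ D : Type*} [MeasurableSpace Λ] [MeasurableSpace D]
    (μΛ : Measure Λ) (μD : Measure D)
    (Q : Λ → D) (hQ : Measurable Q)
    (πprior : Λ → ℝ) (hπprior : Measurable πprior) (hprior0 : ∀ l, 0 ≤ πprior l)
    (hprior1 : ∫⁻ l, ENNReal.ofReal (πprior l) ∂μΛ = 1)
    (πQ : D → ℝ) (hπQ : Measurable πQ) (hπQ0 : ∀ q, 0 ≤ πQ q)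
    (hpush : Measure.map Q (μΛ.withDensity (fun l => ENNReal.ofReal (πprior l)))
      = μD.withDensity (fun q => ENNReal.ofReal (πQ q)))
    (πobs : D → ℝ) (hπobs : Measurable πobs) (hobs0 : ∀ q, 0 ≤ πobs q)
    (hobs1 : ∫⁻ q, ENNReal.ofReal (πobs q) ∂μD = 1)
    (habs : ∀ q, πQ q = 0 → πobs q = 0)
    (πpost : Λ → ℝ) (hpost : πpost = fun l => πprior l * (πobs (Q l) / πQ (Q l)))
    (hint₁ : Integrable (fun l => πpost l * Real.log (πpost l / πprior l)) μΛ)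
    (hint₂ : Integrable (fun q => πobs q * Real.log (πobs q / πQ q)) μD) :
    ∫ l, πpost l * Real.log (πpost l / πprior l) ∂μΛ
      = ∫ q, πobs q * Real.log (πobs q / πQ q) ∂μD := by
  set f : D → ℝ := fun q => (πobs q / πQ q) * Real.log (πobs q / πQ q) with hf
  have hfm : Measurable f := (hπobs.div hπQ).mul (Real.measurable_log.comp (hπobs.div hπQ))
  have hfpm : Measurable fun l => (πprior l).toNNReal := hπprior.real_toNNReal
  have hfqm : Measurable fun q => (πQ q).toNNReal := hπQ.real_toNNReal
  have hcp : (fun l => ENNReal.ofReal (πprior l)) = fun l => ((πprior l).toNNReal : ℝ≥0∞) := rfl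
  have hcq : (fun q => ENNReal.ofReal (πQ q)) = fun q => ((πQ q).toNNReal : ℝ≥0∞) := rfl
  have step1 : ∫ l, πpost l * Real.log (πpost l / πprior l) ∂μΛ
      = ∫ l, πprior l * f (Q l) ∂μΛ := by
    congr 1; funext l
    subst hpost
    by_cases h : πprior l = 0
    · simp [h, hf]
    · simp only [mul_div_assoc, mul_comm (πprior l) (πobs (Q l) / πQ (Q l)),
        mul_div_cancel_right₀ _ h, hf]
      ring
  have step2 : ∫ l, πprior l * f (Q l) ∂μΛ
      = ∫ l, f (Q l) ∂(μΛ.withDensity fun l => ENNReal.ofReal (πprior l)) := by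
    rw [hcp, integral_withDensity_eq_integral_smul hfpm]
    congr 1; funext l
    simp [NNReal.smul_def, Real.coe_toNNReal _ (hprior0 l)]
  have step3 : ∫ l, f (Q l) ∂(μΛ.withDensity fun l => ENNReal.ofReal (πprior l))
      = ∫ q, f q ∂(Measure.map Q (μΛ.withDensity fun l => ENNReal.ofReal (πprior l))) := by
    rw [integral_map hQ.aemeasurable hfm.aestronglyMeasurable]
  have step4 : ∫ q, f q ∂(μD.withDensity fun q => ENNReal.ofReal (πQ q))
      = ∫ q, πQ q * f q ∂μD := by
    rw [hcq, integral_withDensity_eq_integral_smul hfqm]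
    congr 1; funext q
    simp [NNReal.smul_def, Real.coe_toNNReal _ (hπQ0 q)]
  have step5 : ∫ q, πQ q * f q ∂μD = ∫ q, πobs q * Real.log (πobs q / πQ q) ∂μD := by
    congr 1; funext q
    by_cases h : πQ q = 0
    · simp [h, hf, habs q h]
    · have : πQ q * (πobs q / πQ q) = πobs q := by field_simp
      simp only [hf]
      rw [← mul_assoc, this]
  rw [step1, step2, step3, hpush, step4, step5]
end

section
/- Let $Q : \mathbb{R}^n \to \mathbb{R}^n$ be an invertible affine map $Q(\lambda) = M\lambda + b$ with $M$ invertible, and let the prior be the uniform density on a set $\Lambda \subset \mathbb{R}^n$ of positive finite Lebesgue measure. Then the push-forward density of the prior under $Q$ is uniform (constant equal to $1/(|\det M| \cdot |\Lambda|)$) on $Q(\Lambda)$. Consequently, for any observed density $\pi^{obs}$ supported in $Q(\Lambda)$, the consistent Bayesian posterior $\pi^{post}(\lambda) \propto \pi^{prior}(\lambda)\, \pi^{obs}(Q(\lambda))/\pi^{Q(prior)}(Q(\lambda))$ coincides with the statistical Bayesian posterior $\tilde{\pi}^{post}(\lambda) \propto \pi^{prior}(\lambda)\, \pi^{obs}(Q(\lambda))$.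 -/
/-!
An invertible affine map `Q` pushes Lebesgue measure to `|det M|⁻¹` times Lebesgue measure, so it
carries the uniform density on `s` to the uniform density on `Q '' s`. Since `πobs` vanishes off
`Q '' s`, the same change of variables turns the normalising constant `∫ πprior · (πobs ∘ Q)` into
`(|det M| |s|)⁻¹ ∫ πobs = (|det M| |s|)⁻¹`, which is the value of `πQ ∘ Q` wherever the prior is
nonzero.
-/

open MeasureTheory ENNReal Matrix

namespace MeasurableEquiv

variable {α β : Type*} [MeasurableSpace α] [MeasurableSpace β]

theorem map_withDensity (e : α ≃ᵐ β) (μ : Measure α) (f : α → ℝ≥0∞) :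
    (μ.withDensity f).map e = (μ.map e).withDensity (f ∘ e.symm) := by
  ext t ht
  rw [e.map_apply, withDensity_apply _ (e.measurable ht), withDensity_apply _ ht,
    e.restrict_map, lintegral_map_equiv]
  simp

variable {μ : Measure α} {ν : Measure β} {c : ℝ≥0∞}

theorem map_withDensity_indicator_const (e : α ≃ᵐ β) (hc : c ≠ ∞) (hμν : μ.map e = c • ν)
    (s : Set α) (a : ℝ≥0∞) :
    (μ.withDensity (s.indicator fun _ => a)).map e
      = ν.withDensity ((e '' s).indicator fun _ => c * a) := by
  rw [e.map_withDensity, hμν, withDensity_smul_measure, ← withDensity_smul' _ _ hc,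
    e.image_eq_preimage_symm]
  congr 1
  ext y
  by_cases hy : e.symm y ∈ s <;> simp [hy]

theorem lintegral_indicator_const_mul_comp (e : α ≃ᵐ β) (hμν : μ.map e = c • ν)
    (s : Set α) (a : ℝ≥0∞) {g : β → ℝ≥0∞} (hg : Measurable g) (hgs : ∀ y ∉ e '' s, g y = 0) :
    ∫⁻ x, s.indicator (fun _ => a) x * g (e x) ∂μ = c * a * ∫⁻ y, g y ∂ν := by
  have hindicator : ∀ x, s.indicator (fun _ => a) x * g (e x) = a * g (e x) := by
    intro x
    by_cases hx : x ∈ s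
    · rw [Set.indicator_of_mem hx]
    · rw [hgs _ (by simpa [e.injective.mem_set_image] using hx), mul_zero, mul_zero]
  simp_rw [hindicator]
  rw [lintegral_const_mul a (f := fun x => g (e x)) (hg.comp e.measurable),
    ← lintegral_map_equiv, hμν, lintegral_smul_measure, smul_eq_mul]
  ring

end MeasurableEquiv

namespace Matrix

variable {ι : Type*} [Fintype ι] [DecidableEq ι]

noncomputable def affineMeasurableEquiv (M : Matrix ι ι ℝ) (hM : M.det ≠ 0) (b : ι → ℝ) :
    (ι → ℝ) ≃ᵐ (ι → ℝ) where
  toFun x := M *ᵥ x + b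
  invFun y := M⁻¹ *ᵥ (y - b)
  left_inv x := by simp [mulVec_mulVec, nonsing_inv_mul M (isUnit_iff_ne_zero.mpr hM)]
  right_inv y := by simp [mulVec_mulVec, mul_nonsing_inv M (isUnit_iff_ne_zero.mpr hM)]
  measurable_toFun := (continuous_const.matrix_mulVec continuous_id).measurable.add_const b
  measurable_invFun :=
    (continuous_const.matrix_mulVec (continuous_id.sub continuous_const)).measurable

theorem coe_affineMeasurableEquiv (M : Matrix ι ι ℝ) (hM : M.det ≠ 0) (b : ι → ℝ) :
    ⇑(M.affineMeasurableEquiv hM b) = fun x => M *ᵥ x + b := rfl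

theorem map_affine_volume {M : Matrix ι ι ℝ} (hM : M.det ≠ 0) (b : ι → ℝ) :
    (volume : Measure (ι → ℝ)).map (fun x => M *ᵥ x + b)
      = (ENNReal.ofReal |M.det|)⁻¹ • volume := by
  have hsplit : (fun x => M *ᵥ x + b) = (· + b) ∘ toLin' M := rfl
  rw [hsplit, ← Measure.map_map (measurable_add_const b) (LinearMap.continuous_on_pi _).measurable,
    Real.map_matrix_volume_pi_eq_smul_volume_pi hM, Measure.map_smul, map_add_right_eq_self,
    abs_inv, ENNReal.ofReal_inv_of_pos (abs_pos.mpr hM)]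

end Matrix

theorem ENNReal.mul_div_eq_mul_div_of_ne_zero {a b d z : ℝ≥0∞} (h : a ≠ 0 → d = z) :
    a * (b / d) = a * b / z := by
  by_cases ha : a = 0
  · simp [ha]
  · rw [h ha, mul_div_assoc]

theorem affine_uniform_pushforward_and_posterior_coincidence_general
    (n : ℕ) (M : Matrix (Fin n) (Fin n) ℝ) (hM : M.det ≠ 0) (b : Fin n → ℝ)
    (Q : (Fin n → ℝ) → (Fin n → ℝ)) (hQ : Q = fun x => M.mulVec x + b)
    (s : Set (Fin n → ℝ))
    (πprior : (Fin n → ℝ) → ℝ≥0∞)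
    (hπprior : πprior = s.indicator fun _ => (volume s)⁻¹)
    (πQ : (Fin n → ℝ) → ℝ≥0∞)
    (hπQ : πQ = (Q '' s).indicator fun _ => (ENNReal.ofReal |M.det| * volume s)⁻¹)
    (πobs : (Fin n → ℝ) → ℝ≥0∞) (hπobs : Measurable πobs)
    (hobs1 : ∫⁻ q, πobs q = 1)
    (hsupp : ∀ q ∉ Q '' s, πobs q = 0) :
    (Measure.map Q (volume.withDensity πprior) = volume.withDensity πQ) ∧
    (∀ l, πprior l * (πobs (Q l) / πQ (Q l))
        = πprior l * πobs (Q l) / ∫⁻ x, πprior x * πobs (Q x)) := by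
  set e := M.affineMeasurableEquiv hM b
  have he : ⇑e = Q := hQ ▸ M.coe_affineMeasurableEquiv hM b
  have hvol : volume.map e = (ENNReal.ofReal |M.det|)⁻¹ • volume := by
    rw [he, hQ]; exact map_affine_volume hM b
  have hdet : ENNReal.ofReal |M.det| ≠ 0 := by simpa using hM
  have hconst : (ENNReal.ofReal |M.det|)⁻¹ * (volume s)⁻¹ = (ENNReal.ofReal |M.det| * volume s)⁻¹ :=
    (ENNReal.mul_inv (.inl hdet) (.inl ofReal_ne_top)).symm
  have hnorm : ∫⁻ x, πprior x * πobs (Q x) = (ENNReal.ofReal |M.det| * volume s)⁻¹ := by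
    rw [hπprior, ← he, e.lintegral_indicator_const_mul_comp hvol s _ hπobs (he ▸ hsupp), hobs1,
      mul_one, hconst]
  refine ⟨?_, fun l => ?_⟩
  · rw [hπprior, hπQ, ← he, e.map_withDensity_indicator_const (inv_ne_top.mpr hdet) hvol, hconst]
  · rw [hnorm]
    refine ENNReal.mul_div_eq_mul_div_of_ne_zero fun hl => ?_
    rw [hπprior] at hl
    rw [hπQ, Set.indicator_of_mem (Set.mem_image_of_mem Q (Set.mem_of_indicator_ne_zero hl))]

/-- For an invertible affine map and a uniform prior on a set `s` of positive finite measure,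
the push-forward density of the prior is the uniform (constant) density on `Q '' s`;
consequently the consistent Bayesian posterior coincides with the statistical Bayesian
posterior `∝ πprior · (πobs ∘ Q)`. -/
theorem affine_uniform_pushforward_and_posterior_coincidence
    (n : ℕ) (M : Matrix (Fin n) (Fin n) ℝ) (hM : M.det ≠ 0) (b : Fin n → ℝ)
    (Q : (Fin n → ℝ) → (Fin n → ℝ)) (hQ : Q = fun x => M.mulVec x + b)
    (s : Set (Fin n → ℝ)) (hs : MeasurableSet s)
    (hs0 : 0 < volume s) (hsfin : volume s < ⊤)
    (πprior : (Fin n → ℝ) → ℝ≥0∞)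
    (hπprior : πprior = s.indicator fun _ => (volume s)⁻¹)
    (πQ : (Fin n → ℝ) → ℝ≥0∞)
    (hπQ : πQ = (Q '' s).indicator fun _ => (ENNReal.ofReal |M.det| * volume s)⁻¹)
    (πobs : (Fin n → ℝ) → ℝ≥0∞) (hπobs : Measurable πobs)
    (hobs1 : ∫⁻ q, πobs q = 1)
    (hsupp : ∀ q ∉ Q '' s, πobs q = 0) :
    (Measure.map Q (volume.withDensity πprior) = volume.withDensity πQ) ∧
    (∀ l, πprior l * (πobs (Q l) / πQ (Q l))
        = πprior l * πobs (Q l) / ∫⁻ x, πprior x * πobs (Q x)) :=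
  affine_uniform_pushforward_and_posterior_coincidence_general n M hM b Q hQ s πprior hπprior πQ hπQ
    πobs hπobs hobs1 hsupp
end

section
/- Let $Q(\lambda) = \lambda^p$ on $\Lambda = [-1, 1]$ for an odd integer $p \geq 3$, with uniform prior density $\pi^{prior} = 1/2$. Then the push-forward density of the prior with respect to Lebesgue measure on $[-1,1]$ is $\pi^{Q(prior)}(q) = \frac{1}{2p} |q|^{1/p - 1}$ for $q \neq 0$; in particular it is nonconstant, and hence for a nonconstant observed density $\pi^{obs}$ the consistent posterior $\pi^{post}(\lambda) = \frac{1}{2} \pi^{obs}(\lambda^p) / \pi^{Q(prior)}(\lambda^p) = p\, |\lambda|^{p-1} \pi^{obs}(\lambda^p)$ differs from the statistical Bayesian posterior $\tilde{\pi}^{post}(\lambda) \propto \pi^{obs}(\lambda^p)$ on a set of positive measure. -/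
/-!
Away from `λ = 0` the Jacobian `p |λ|^(p-1)` of `λ ↦ λ^p` times `π^{Q(prior)}(λ^p)` is the
constant `1/2`, so the one-dimensional change of variables identifies the push-forward. If the
two posteriors agreed almost everywhere, then, since `p |λ|^(p-1)` takes each value at most twice,
`πobs (λ^p)` would vanish for a.e. `λ ∈ [-1, 1]`. The push-forward density is positive off `0`, so
Lebesgue measure on `[-1, 1]` is absolutely continuous with respect to the push-forward, and
`πobs` would vanish a.e. on `[-1, 1]`, contradicting `∫ πobs = 1`.
-/

open MeasureTheory ENNReal Set

theorem map_withDensity_const_eq_withDensity_of_abs_deriv_mul {s : Set ℝ} {f f' : ℝ → ℝ}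
    {ρ : ℝ → ℝ≥0∞} {c : ℝ≥0∞} (hs : MeasurableSet s) (hf : Measurable f)
    (hf' : ∀ x ∈ s, HasDerivWithinAt f (f' x) s x) (hinj : InjOn f s)
    (hρ : ∀ᵐ x ∂volume.restrict s, ENNReal.ofReal |f' x| * ρ (f x) = c) :
    Measure.map f ((volume.restrict s).withDensity fun _ => c) =
      (volume.restrict (f '' s)).withDensity ρ := by
  refine Measure.ext fun A hA => ?_
  have hsA : MeasurableSet (f ⁻¹' A ∩ s) := (hf hA).inter hs
  rw [Measure.map_apply hf hA, withDensity_apply _ hA, withDensity_apply _ (hf hA),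
    Measure.restrict_restrict hA, Measure.restrict_restrict (hf hA), ← image_preimage_inter,
    lintegral_image_eq_lintegral_abs_deriv_mul hsA
      (fun x hx => (hf' x hx.2).mono inter_subset_right) (hinj.mono inter_subset_right)]
  exact lintegral_congr_ae <|
    (ae_restrict_of_ae_restrict_of_subset inter_subset_right hρ).mono fun _ h => h.symm

/-- The paper's `π^{Q(prior)}`. -/
noncomputable def powPushforwardDensity (p : ℕ) (q : ℝ) : ℝ :=
  1 / (2 * p) * |q| ^ ((1 : ℝ) / p - 1)

lemma powPushforwardDensity_pos {p : ℕ} (hp : p ≠ 0) {q : ℝ} (hq : q ≠ 0) :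
    0 < powPushforwardDensity p q := by
  unfold powPushforwardDensity
  have : 0 < |q| := abs_pos.mpr hq
  positivity

lemma measurable_powPushforwardDensity (p : ℕ) : Measurable (powPushforwardDensity p) :=
  (continuous_abs.measurable.pow_const _).const_mul _

lemma abs_deriv_pow_mul_powPushforwardDensity {p : ℕ} (hp : p ≠ 0) {x : ℝ} (hx : x ≠ 0) :
    |(p : ℝ) * x ^ (p - 1)| * powPushforwardDensity p (x ^ p) = 1 / 2 := by
  have hx' : 0 < |x| := abs_pos.mpr hx
  have hrpow : |x ^ p| ^ ((1 : ℝ) / p - 1) = |x| ^ (1 - (p : ℝ)) := by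
    rw [abs_pow, ← Real.rpow_natCast, ← Real.rpow_mul hx'.le]
    congr 1
    field_simp
  have hcancel : |x| ^ (p - 1) * |x| ^ (1 - (p : ℝ)) = 1 := by
    rw [← Real.rpow_natCast, Nat.cast_sub (Nat.one_le_iff_ne_zero.mpr hp), ← Real.rpow_add hx']
    norm_num
  rw [powPushforwardDensity, hrpow, abs_mul, abs_pow, Nat.abs_cast]
  calc (p : ℝ) * |x| ^ (p - 1) * (1 / (2 * p) * |x| ^ (1 - (p : ℝ)))
      = (p : ℝ) / (2 * p) * (|x| ^ (p - 1) * |x| ^ (1 - (p : ℝ))) := by ring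
    _ = 1 / 2 := by rw [hcancel]; field_simp

lemma Odd.image_pow_Icc_neg_one_one {p : ℕ} (hodd : Odd p) :
    (fun l : ℝ => l ^ p) '' Icc (-1) 1 = Icc (-1) 1 := by
  rw [(continuous_pow p).image_Icc_of_strictMono hodd.strictMono_pow, hodd.neg_one_pow, one_pow]

theorem map_pow_uniform_eq_withDensity_powPushforwardDensity {p : ℕ} (hodd : Odd p) :
    Measure.map (fun l : ℝ => l ^ p)
        ((volume.restrict (Icc (-1 : ℝ) 1)).withDensity fun _ => ENNReal.ofReal (1 / 2)) =
      (volume.restrict (Icc (-1 : ℝ) 1)).withDensity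
        fun q => ENNReal.ofReal (powPushforwardDensity p q) := by
  have hp : p ≠ 0 := hodd.pos.ne'
  conv_rhs => rw [← hodd.image_pow_Icc_neg_one_one]
  refine map_withDensity_const_eq_withDensity_of_abs_deriv_mul measurableSet_Icc
    (measurable_id.pow_const p) (fun x _ => (hasDerivAt_pow p x).hasDerivWithinAt)
    hodd.strictMono_pow.injective.injOn ?_
  filter_upwards [Measure.ae_ne _ 0] with x hx
  rw [← ENNReal.ofReal_mul (abs_nonneg _), abs_deriv_pow_mul_powPushforwardDensity hp hx]

lemma finite_setOf_abs_pow_eq {n : ℕ} (hn : n ≠ 0) (c : ℝ) : {l : ℝ | |l| ^ n = c}.Finite := by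
  rcases eq_empty_or_nonempty {l : ℝ | |l| ^ n = c} with h | ⟨a, ha⟩
  · simp [h]
  refine (toFinite {a, -a}).subset fun l hl => ?_
  have : |l| = |a| := (pow_left_inj₀ (abs_nonneg l) (abs_nonneg a) hn).mp (hl.trans ha.symm)
  rcases abs_eq_abs.mp this with h | h <;> simp [h]

lemma ae_eq_zero_of_ae_mul_abs_pow_eq_div {μ : Measure ℝ} [NullSingletonClass μ] {p : ℕ}
    (hp : 2 ≤ p) {y : ℝ → ℝ} (Z : ℝ) (h : ∀ᵐ l ∂μ, (p : ℝ) * |l| ^ (p - 1) * y l = y l / Z) :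
    ∀ᵐ l ∂μ, y l = 0 := by
  have hpR : (p : ℝ) ≠ 0 := by positivity
  have hlevel := (finite_setOf_abs_pow_eq (n := p - 1) (by omega) (Z⁻¹ / p)).countable
  filter_upwards [h, hlevel.ae_notMem μ] with l hl hl'
  by_contra hy
  have hcoef : (p : ℝ) * |l| ^ (p - 1) = Z⁻¹ :=
    mul_right_cancel₀ hy (by rw [hl, div_eq_inv_mul])
  exact hl' ((eq_div_iff hpR).mpr (by rw [mul_comm, hcoef]))

lemma Odd.absolutelyContinuous_map_pow_uniform {p : ℕ} (hodd : Odd p) :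
    volume.restrict (Icc (-1 : ℝ) 1) ≪ Measure.map (fun l : ℝ => l ^ p)
      ((volume.restrict (Icc (-1 : ℝ) 1)).withDensity fun _ => ENNReal.ofReal (1 / 2)) := by
  rw [map_pow_uniform_eq_withDensity_powPushforwardDensity hodd]
  refine withDensity_absolutelyContinuous'
    (measurable_powPushforwardDensity p).ennreal_ofReal.aemeasurable ?_
  filter_upwards [Measure.ae_ne _ 0] with q hq
  exact (ENNReal.ofReal_pos.mpr (powPushforwardDensity_pos hodd.pos.ne' hq)).ne'

theorem odd_power_map_posteriors_differ_general
    (p : ℕ) (hp : 3 ≤ p) (hodd : Odd p)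
    (πobs : ℝ → ℝ) (hπobs : Measurable πobs)
    (hobs1 : ∫ q in Set.Icc (-1 : ℝ) 1, πobs q = 1) :
    (Measure.map (fun l : ℝ => l ^ p)
        ((volume.restrict (Set.Icc (-1 : ℝ) 1)).withDensity
          fun _ => ENNReal.ofReal (1 / 2))
      = (volume.restrict (Set.Icc (-1 : ℝ) 1)).withDensity
          fun q => ENNReal.ofReal (1 / (2 * p) * |q| ^ ((1 : ℝ) / p - 1))) ∧
    0 < volume {l ∈ Set.Icc (-1 : ℝ) 1 |
        (p : ℝ) * |l| ^ (p - 1) * πobs (l ^ p)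
          ≠ πobs (l ^ p) / ∫ x in Set.Icc (-1 : ℝ) 1, πobs (x ^ p)} := by
  refine ⟨map_pow_uniform_eq_withDensity_powPushforwardDensity hodd, ?_⟩
  by_contra! hnull
  have hposteriors : ∀ᵐ l ∂volume.restrict (Icc (-1 : ℝ) 1),
      (p : ℝ) * |l| ^ (p - 1) * πobs (l ^ p) =
        πobs (l ^ p) / ∫ x in Icc (-1 : ℝ) 1, πobs (x ^ p) := by
    rw [ae_iff, Measure.restrict_apply' measurableSet_Icc, inter_comm]
    exact nonpos_iff_eq_zero.mp hnull
  have hcomp : ∀ᵐ l ∂(volume.restrict (Icc (-1 : ℝ) 1)).withDensity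
      fun _ => ENNReal.ofReal (1 / 2), πobs (l ^ p) = 0 :=
    (withDensity_absolutelyContinuous _ _).ae_le
      (ae_eq_zero_of_ae_mul_abs_pow_eq_div (by omega) _ hposteriors)
  have hobs_zero : ∀ᵐ q ∂volume.restrict (Icc (-1 : ℝ) 1), πobs q = 0 :=
    hodd.absolutelyContinuous_map_pow_uniform.ae_le <|
      (ae_map_iff (measurable_id.pow_const p).aemeasurable
        (hπobs (measurableSet_singleton 0))).2 hcomp
  simp [integral_eq_zero_of_ae hobs_zero] at hobs1

/-- For the map `Q(λ) = λ^p` on `[-1,1]` with odd `p ≥ 3` and uniform prior `1/2`,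
the push-forward density of the prior is `(1/(2p))|q|^{1/p - 1}`, which is nonconstant;
hence for any nonconstant observed density the consistent Bayesian posterior
`p |λ|^{p-1} πobs(λ^p)` differs from the statistical Bayesian posterior
`πobs(λ^p)/Z` on a set of positive measure. -/
theorem odd_power_map_posteriors_differ
    (p : ℕ) (hp : 3 ≤ p) (hodd : Odd p)
    (πobs : ℝ → ℝ) (hπobs : Measurable πobs) (hobs0 : ∀ q, 0 ≤ πobs q)
    (hobs1 : ∫ q in Set.Icc (-1 : ℝ) 1, πobs q = 1)
    (hnonconst : ∃ q₁ ∈ Set.Icc (-1 : ℝ) 1, ∃ q₂ ∈ Set.Icc (-1 : ℝ) 1,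
      πobs q₁ ≠ πobs q₂) :
    (Measure.map (fun l : ℝ => l ^ p)
        ((volume.restrict (Set.Icc (-1 : ℝ) 1)).withDensity
          fun _ => ENNReal.ofReal (1 / 2))
      = (volume.restrict (Set.Icc (-1 : ℝ) 1)).withDensity
          fun q => ENNReal.ofReal (1 / (2 * p) * |q| ^ ((1 : ℝ) / p - 1))) ∧
    0 < volume {l ∈ Set.Icc (-1 : ℝ) 1 |
        (p : ℝ) * |l| ^ (p - 1) * πobs (l ^ p)
          ≠ πobs (l ^ p) / ∫ x in Set.Icc (-1 : ℝ) 1, πobs (x ^ p)} :=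
  odd_power_map_posteriors_differ_general p hp hodd πobs hπobs hobs1
end
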